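/- arXiv:2401.10056 — 11 statements merged into one kernel-verified Lean document; each statement's English description precedes it below -/
import Mathlib

section
/- Let R be a binary relation on For_BCL. Then: (a) if R satisfies (a1), then ¬(A→¬A) is valid in R for every formula A; (b) if R satisfies (a2), then ¬(¬A→A) is valid in R for every formula A; (c) if R satisfies (b0) and (b1), then (A→B)→¬(A→¬B) is valid in R for all formulas A, B; (d) if R satisfies (b0) and (b2), then (A→¬B)→¬(A→B) is valid in R for all formulas A, B. -/
/-- Formulas of BCL: variables, negation, conjunction, disjunction, connexive implication. -/
inductive BForm : Type
  | var : ℕ → BForm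
  | neg : BForm → BForm
  | conj : BForm → BForm → BForm
  | disj : BForm → BForm → BForm
  | imp : BForm → BForm → BForm
  deriving DecidableEq

/-- Truth of a formula in a BCL model ⟨v, R⟩. -/
def bsat (v : ℕ → Bool) (R : BForm → BForm → Prop) : BForm → Prop
  | .var p => v p = true
  | .neg B => ¬ bsat v R B
  | .conj B C => bsat v R B ∧ bsat v R C
  | .disj B C => bsat v R B ∨ bsat v R C
  | .imp B C => (¬ bsat v R B ∨ bsat v R C) ∧ R B C

/-- Validity in a relation: true in ⟨v, R⟩ for every valuation v. -/
def bvalid (R : BForm → BForm → Prop) (A : BForm) : Prop :=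
  ∀ v : ℕ → Bool, bsat v R A

def condA1 (R : BForm → BForm → Prop) : Prop := ∀ A, ¬ R A (.neg A)
def condA2 (R : BForm → BForm → Prop) : Prop := ∀ A, ¬ R (.neg A) A
def condB0 (R : BForm → BForm → Prop) : Prop := ∀ A B, R A B → ¬ R A (.neg B)
def condB1 (R : BForm → BForm → Prop) : Prop :=
  ∀ A B, R (.imp A B) (.neg (.imp A (.neg B)))
def condB2 (R : BForm → BForm → Prop) : Prop :=
  ∀ A B, R (.imp A (.neg B)) (.neg (.imp A B))
def condCUN (R : BForm → BForm → Prop) : Prop := ∀ A B, R A B → R (.neg A) (.neg B)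

/-- ¬^j A : the formula A prefixed by j negations. -/
def negs : ℕ → BForm → BForm
  | 0, A => A
  | n + 1, A => .neg (negs n A)

/-- Theorem 5.1 of Jarmużek–Malinowski: the connexive conditions on R force
Aristotle's and Boethius' theses to be valid in R. -/
theorem bcl_connexive_soundness (R : BForm → BForm → Prop) :
    (condA1 R → ∀ A : BForm, bvalid R (.neg (.imp A (.neg A)))) ∧
    (condA2 R → ∀ A : BForm, bvalid R (.neg (.imp (.neg A) A))) ∧
    (condB0 R ∧ condB1 R →
      ∀ A B : BForm, bvalid R (.imp (.imp A B) (.neg (.imp A (.neg B))))) ∧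
    (condB0 R ∧ condB2 R →
      ∀ A B : BForm, bvalid R (.imp (.imp A (.neg B)) (.neg (.imp A B)))) := by
  refine ⟨fun h A v => ?_, fun h A v => ?_, fun ⟨h0, h1⟩ A B v => ?_, fun ⟨h0, h2⟩ A B v => ?_⟩
  · simp only [bsat]; exact fun ⟨_, hR⟩ => h A hR
  · simp only [bsat]; exact fun ⟨_, hR⟩ => h A hR
  · simp only [bsat]
    refine ⟨?_, h1 A B⟩
    by_cases hb : R A B
    · exact Or.inr fun hx => h0 A B hb hx.2
    · exact Or.inl fun hx => hb hx.2
  · simp only [bsat]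
    refine ⟨?_, h2 A B⟩
    by_cases hb : R A B
    · exact Or.inl fun hx => h0 A B hb hx.2
    · exact Or.inr fun hx => hb hx.2
end

section
/- Let R be a binary relation on For_BCL satisfying (cun). Then: (a) R satisfies (a1) if and only if ¬(A→¬A) is valid in R for every formula A; (b) R satisfies (a2) if and only if ¬(¬A→A) is valid in R for every formula A; (c) R satisfies both (b0) and (b1) if and only if (A→B)→¬(A→¬B) is valid in R for all formulas A, B; (d) R satisfies both (b0) and (b2) if and only if (A→¬B)→¬(A→B) is valid in R for all formulas A, B. -/
/-- Theorem 6.1 of Jarmużek–Malinowski: under closure under negation (cun),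
the connexive conditions on R correspond exactly to the validity of
Aristotle's and Boethius' theses in R. -/
theorem bcl_connexive_correspondence (R : BForm → BForm → Prop) (hcun : condCUN R) :
    (condA1 R ↔ ∀ A : BForm, bvalid R (.neg (.imp A (.neg A)))) ∧
    (condA2 R ↔ ∀ A : BForm, bvalid R (.neg (.imp (.neg A) A))) ∧
    ((condB0 R ∧ condB1 R) ↔
      ∀ A B : BForm, bvalid R (.imp (.imp A B) (.neg (.imp A (.neg B))))) ∧
    ((condB0 R ∧ condB2 R) ↔
      ∀ A B : BForm, bvalid R (.imp (.imp A (.neg B)) (.neg (.imp A B)))) := by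
  refine ⟨⟨?_, ?_⟩, ⟨?_, ?_⟩, ⟨?_, ?_⟩, ⟨?_, ?_⟩⟩
  · intro h A v
    simp only [bsat]
    have := h A
    tauto
  · intro h A hR
    set v : ℕ → Bool := fun _ => true
    by_cases hA : bsat v R A
    · have := h (.neg A) v
      simp only [bsat] at this
      exact this ⟨Or.inl (fun h' => h' hA), hcun _ _ hR⟩
    · have := h A v
      simp only [bsat] at this
      exact this ⟨Or.inl hA, hR⟩
  · intro h A v
    simp only [bsat]
    have := h A
    tauto
  · intro h A hR
    set v : ℕ → Bool := fun _ => true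
    by_cases hA : bsat v R A
    · have := h A v
      simp only [bsat] at this
      exact this ⟨Or.inr hA, hR⟩
    · have := h (.neg A) v
      simp only [bsat] at this
      exact this ⟨Or.inr hA, hcun _ _ hR⟩
  · rintro ⟨h0, h1⟩ A B v
    simp only [bsat]
    refine ⟨?_, h1 A B⟩
    by_cases hAB : R A B
    · have := h0 A B hAB
      tauto
    · tauto
  · intro h
    constructor
    · intro A B hAB hAnB
      set v : ℕ → Bool := fun _ => true
      by_cases hA : bsat v R A
      · have := (h (.neg A) (.neg B) v).1
        simp only [bsat] at this
        rcases this with hc | hc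
        · exact hc ⟨Or.inl (fun h' => h' hA), hcun _ _ hAB⟩
        · exact hc ⟨Or.inl (fun h' => h' hA), hcun _ _ hAnB⟩
      · have := (h A B v).1
        simp only [bsat] at this
        rcases this with hc | hc
        · exact hc ⟨Or.inl hA, hAB⟩
        · exact hc ⟨Or.inl hA, hAnB⟩
    · intro A B
      have := (h A B (fun _ => true)).2
      exact this
  · rintro ⟨h0, h2⟩ A B v
    simp only [bsat]
    refine ⟨?_, h2 A B⟩
    by_cases hAnB : R A (.neg B)
    · have := h0 A (.neg B) hAnB
      tauto
    · tauto
  · intro h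
    constructor
    · intro A B hAB hAnB
      set v : ℕ → Bool := fun _ => true
      by_cases hA : bsat v R A
      · have := (h (.neg A) (.neg B) v).1
        simp only [bsat] at this
        rcases this with hc | hc
        · exact hc ⟨Or.inl (fun h' => h' hA), hcun _ _ hAnB⟩
        · exact hc ⟨Or.inl (fun h' => h' hA), hcun _ _ hAB⟩
      · have := (h A B v).1
        simp only [bsat] at this
        rcases this with hc | hc
        · exact hc ⟨Or.inl hA, hAnB⟩
        · exact hc ⟨Or.inl hA, hAB⟩
    · intro A B
      exact (h A B (fun _ => true)).2
end

section
/- Let M = ⟨W, Q, {R_w}, v⟩ be a model for MBCL and w ∈ W. Then: (a) if R_w satisfies (a1), then M,w ⊨ ¬(A→¬A) for every formula A; (b) if R_w satisfies (a2), then M,w ⊨ ¬(¬A→A) for every formula A; (c) if R_w satisfies (b0) and (b1), then M,w ⊨ (A→B)→¬(A→¬B) for all formulas A, B; (d) if R_w satisfies (b0) and (b2), then M,w ⊨ (A→¬B)→¬(A→B) for all formulas A, B. -/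
/-- Formulas of MBCL: variables, negation, box, diamond, conjunction,
disjunction, connexive implication. -/
inductive MForm : Type
  | var : ℕ → MForm
  | neg : MForm → MForm
  | box : MForm → MForm
  | dia : MForm → MForm
  | conj : MForm → MForm → MForm
  | disj : MForm → MForm → MForm
  | imp : MForm → MForm → MForm
  deriving DecidableEq

/-- A model for MBCL: a nonempty set of worlds, an accessibility relation,
a family of relating relations indexed by worlds, and a valuation. -/
structure MModel where
  W : Type
  ne : Nonempty W
  Q : W → W → Prop
  R : W → MForm → MForm → Prop
  v : W → ℕ → Bool

/-- Truth of a formula at a world of an MBCL model. -/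
def msat (M : MModel) : M.W → MForm → Prop
  | w, .var p => M.v w p = true
  | w, .neg B => ¬ msat M w B
  | w, .box B => ∀ u, M.Q w u → msat M u B
  | w, .dia B => ∃ u, M.Q w u ∧ msat M u B
  | w, .conj B C => msat M w B ∧ msat M w C
  | w, .disj B C => msat M w B ∨ msat M w C
  | w, .imp B C => (¬ msat M w B ∨ msat M w C) ∧ M.R w B C

def mcondA1 (R : MForm → MForm → Prop) : Prop := ∀ A, ¬ R A (.neg A)
def mcondA2 (R : MForm → MForm → Prop) : Prop := ∀ A, ¬ R (.neg A) A
def mcondB0 (R : MForm → MForm → Prop) : Prop := ∀ A B, R A B → ¬ R A (.neg B)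
def mcondB1 (R : MForm → MForm → Prop) : Prop :=
  ∀ A B, R (.imp A B) (.neg (.imp A (.neg B)))
def mcondB2 (R : MForm → MForm → Prop) : Prop :=
  ∀ A B, R (.imp A (.neg B)) (.neg (.imp A B))
def mcondCUN (R : MForm → MForm → Prop) : Prop := ∀ A B, R A B → R (.neg A) (.neg B)

/-- ¬^j A : the formula A prefixed by j negations. -/
def mnegs : ℕ → MForm → MForm
  | 0, A => A
  | n + 1, A => .neg (mnegs n A)

/-- Theorem 3.1 of Jarmużek–Malinowski (modal case): the connexive conditions on
the relating relation R_w force Aristotle's and Boethius' theses at the world w. -/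
theorem mbcl_connexive_soundness (M : MModel) (w : M.W) :
    (mcondA1 (M.R w) → ∀ A : MForm, msat M w (.neg (.imp A (.neg A)))) ∧
    (mcondA2 (M.R w) → ∀ A : MForm, msat M w (.neg (.imp (.neg A) A))) ∧
    (mcondB0 (M.R w) ∧ mcondB1 (M.R w) →
      ∀ A B : MForm, msat M w (.imp (.imp A B) (.neg (.imp A (.neg B))))) ∧
    (mcondB0 (M.R w) ∧ mcondB2 (M.R w) →
      ∀ A B : MForm, msat M w (.imp (.imp A (.neg B)) (.neg (.imp A B)))) := by
  refine ⟨?_, ?_, ?_, ?_⟩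
  · intro h A hA
    exact h A hA.2
  · intro h A hA
    exact h A hA.2
  · rintro ⟨hb0, hb1⟩ A B
    refine ⟨?_, hb1 A B⟩
    by_cases hAB : msat M w (.imp A B)
    · exact Or.inr fun hAnB => hb0 A B hAB.2 hAnB.2
    · exact Or.inl hAB
  · rintro ⟨hb0, hb2⟩ A B
    refine ⟨?_, hb2 A B⟩
    by_cases hAnB : msat M w (.imp A (.neg B))
    · exact Or.inr fun hAB => hb0 A B hAB.2 hAnB.2
    · exact Or.inl hAnB
end

section
/- Let M = ⟨W, Q, {R_w}, v⟩ be a model for MBCL, w ∈ W, and suppose R_w satisfies (cun). Then: (a) R_w satisfies (a1) if and only if M,w ⊨ ¬(A→¬A) for every formula A; (b) R_w satisfies (a2) if and only if M,w ⊨ ¬(¬A→A) for every formula A; (c) R_w satisfies both (b0) and (b1) if and only if M,w ⊨ (A→B)→¬(A→¬B) for all formulas A, B; (d) R_w satisfies both (b0) and (b2) if and only if M,w ⊨ (A→¬B)→¬(A→B) for all formulas A, B. -/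
/-- Theorem 4.1 of Jarmużek–Malinowski (modal case): if R_w is closed under
negation, the connexive conditions on R_w correspond exactly to the truth of
Aristotle's and Boethius' theses at w. -/
theorem mbcl_connexive_correspondence (M : MModel) (w : M.W)
    (hcun : mcondCUN (M.R w)) :
    (mcondA1 (M.R w) ↔ ∀ A : MForm, msat M w (.neg (.imp A (.neg A)))) ∧
    (mcondA2 (M.R w) ↔ ∀ A : MForm, msat M w (.neg (.imp (.neg A) A))) ∧
    ((mcondB0 (M.R w) ∧ mcondB1 (M.R w)) ↔
      ∀ A B : MForm, msat M w (.imp (.imp A B) (.neg (.imp A (.neg B))))) ∧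
    ((mcondB0 (M.R w) ∧ mcondB2 (M.R w)) ↔
      ∀ A B : MForm, msat M w (.imp (.imp A (.neg B)) (.neg (.imp A B)))) := by

  classical
  simp only [msat, mcondA1, mcondA2, mcondB0, mcondB1, mcondB2] at *
  refine ⟨⟨?_, ?_⟩, ⟨?_, ?_⟩, ⟨?_, ?_⟩, ⟨?_, ?_⟩⟩
  · intro h A hA; exact h A hA.2
  · intro h A hR
    by_cases hA : msat M w A
    · exact h (.neg A) ⟨Or.inr (fun hn => hn hA), hcun A (.neg A) hR⟩
    · exact h A ⟨Or.inl hA, hR⟩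
  · intro h A hA; exact h A hA.2
  · intro h A hR
    by_cases hA : msat M w A
    · exact h A ⟨Or.inr hA, hR⟩
    · exact h (.neg A) ⟨Or.inl (fun hn => hn hA), hcun (.neg A) A hR⟩
  · rintro ⟨h0, h1⟩ A B
    refine ⟨?_, h1 A B⟩
    by_cases hAB : msat M w (.imp A B)
    · right; intro hAB'
      simp only [msat] at hAB hAB'
      exact h0 A B hAB.2 hAB'.2
    · left; exact hAB
  · intro h
    refine ⟨?_, fun A B => (h A B).2⟩
    intro A B hR hR'
    by_cases hA : msat M w A
    · rcases (h (.neg A) (.neg B)).1 with hc | hc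
      · simp only [msat] at hc; push_neg at hc
        exact hc (Or.inl hA) (hcun A B hR)
      · simp only [msat] at hc; push_neg at hc
        exact hc (Or.inl hA) (hcun A (.neg B) hR')
    · rcases (h A B).1 with hc | hc
      · push_neg at hc
        exact hc (Or.inl hA) hR
      · push_neg at hc
        exact hc (Or.inl hA) hR'
  · rintro ⟨h0, h2⟩ A B
    refine ⟨?_, h2 A B⟩
    by_cases hAB : msat M w (.imp A (.neg B))
    · right; intro hAB'
      simp only [msat] at hAB hAB'
      exact h0 A B hAB'.2 hAB.2
    · left; exact hAB
  · intro h
    refine ⟨?_, fun A B => (h A B).2⟩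
    intro A B hR hR'
    by_cases hA : msat M w A
    · rcases (h (.neg A) (.neg B)).1 with hc | hc
      · simp only [msat] at hc; push_neg at hc
        exact hc (Or.inl hA) (hcun A (.neg B) hR')
      · simp only [msat] at hc; push_neg at hc
        exact hc (Or.inl hA) (hcun A B hR)
    · rcases (h A B).1 with hc | hc
      · push_neg at hc
        exact hc (Or.inl hA) hR'
      · push_neg at hc
        exact hc (Or.inl hA) hR
end

section
/- For every formula A ∈ For_BCL: A is a theorem of Ax_BCL if and only if A is valid in every binary relation R on For_BCL satisfying (a1), (a2), (b0), (b1) and (b2). -/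
/-- Material implication A ⊃ B, an abbreviation for ¬A ∨ B. -/
def bhimp (A B : BForm) : BForm := .disj (.neg A) B

/-- A is a substitution instance of a classical propositional tautology:
A evaluates to true under every Boolean valuation of formulas that treats
¬, ∧, ∨ classically (variables and →-formulas count as atoms). -/
def IsTautInst (A : BForm) : Prop :=
  ∀ e : BForm → Bool,
    (∀ B, e (.neg B) = !(e B)) →
    (∀ B C, e (.conj B C) = (e B && e C)) →
    (∀ B C, e (.disj B C) = (e B || e C)) →
    e A = true

/-- Axioms of Ax_BCL. -/
inductive BAx : BForm → Prop
  | taut {A : BForm} : IsTautInst A → BAx A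
  | a1 (A : BForm) : BAx (.neg (.imp A (.neg A)))
  | a2 (A : BForm) : BAx (.neg (.imp (.neg A) A))
  | b1 (A B : BForm) : BAx (.imp (.imp A B) (.neg (.imp A (.neg B))))
  | b2 (A B : BForm) : BAx (.imp (.imp A (.neg B)) (.neg (.imp A B)))
  | impAx (A B : BForm) : BAx (bhimp (.imp A B) (bhimp A B))

/-- Theorems of a Hilbert calculus with axioms Ax and modus ponens (for ⊃). -/
inductive BThm (Ax : BForm → Prop) : BForm → Prop
  | ax {A : BForm} : Ax A → BThm Ax A
  | mp {A B : BForm} : BThm Ax A → BThm Ax (bhimp A B) → BThm Ax B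

/-- Axioms of Ax_BCL-CUN : Ax_BCL plus (CUN1) and (CUN2). -/
inductive BAxCUN : BForm → Prop
  | base {A : BForm} : BAx A → BAxCUN A
  | cun1 (A B : BForm) :
      BAxCUN (bhimp (.imp A B) (.disj (.imp (.neg A) (.neg B)) (.conj (.neg A) B)))
  | cun2 (A B : BForm) :
      BAxCUN (bhimp (.imp A B) (.imp (.neg (.neg A)) (.neg (.neg B))))

/-- Axioms of Ax_BCL^{k,l,m,n} : Ax_BCL-CUN plus (GCUN1) and (GCUN2). -/
inductive GAx (k l m n : ℕ) : BForm → Prop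
  | base {A : BForm} : BAxCUN A → GAx k l m n A
  | gcun1 (A B : BForm) :
      GAx k l m n (bhimp (.imp (negs k A) (negs l B))
        (.disj (.imp (negs m A) (negs n B)) (.conj (negs m A) (negs (n + 1) B))))
  | gcun2 (A B : BForm) :
      GAx k l m n (bhimp (.imp (negs k A) (negs l B))
        (.imp (negs (2 * m - k) A) (negs (2 * n - l) B)))

/-- Derivability from a set of premises Γ by axioms and modus ponens. -/
inductive BDeriv (Ax : BForm → Prop) (Γ : Set BForm) : BForm → Prop
  | ax {A : BForm} : Ax A → BDeriv Ax Γ A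
  | prem {A : BForm} : A ∈ Γ → BDeriv Ax Γ A
  | mp {A B : BForm} : BDeriv Ax Γ A → BDeriv Ax Γ (bhimp A B) → BDeriv Ax Γ B

/-- The class Rel^{k,l,m,n}: relations satisfying (a1), (a2), (b0), (b1), (b2),
(cun) and cun_{k,l,m,n}. -/
def RelKLMN (k l m n : ℕ) (R : BForm → BForm → Prop) : Prop :=
  condA1 R ∧ condA2 R ∧ condB0 R ∧ condB1 R ∧ condB2 R ∧ condCUN R ∧
    ∀ A B, R (negs k A) (negs l B) → R (negs m A) (negs n B)

/-- Γ is consistent in the calculus with axioms Ax. -/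
def BConsistent (Ax : BForm → Prop) (Γ : Set BForm) : Prop :=
  ∃ A, ¬ BDeriv Ax Γ A

/-- Γ is maximal consistent in the calculus with axioms Ax. -/
def BMaxCon (Ax : BForm → Prop) (Γ : Set BForm) : Prop :=
  BConsistent Ax Γ ∧ ∀ Δ : Set BForm, Γ ⊂ Δ → ¬ BConsistent Ax Δ

/-- Valuation of the first canonical model of Γ : v(p) = 1 iff p ∈ Γ. -/
noncomputable def canonV (Γ : Set BForm) : ℕ → Bool :=
  fun p => @decide (BForm.var p ∈ Γ) (Classical.propDecidable _)

/-- Relating relation of the first canonical model of Γ : R(A,B) iff A→B ∈ Γ. -/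
def canonR (Γ : Set BForm) : BForm → BForm → Prop :=
  fun A B => BForm.imp A B ∈ Γ

/-- The relating relation R^¬ of the second canonical model of Γ : the least
relation containing the relation induced by the first canonical model
and closed under the (GCUN)- and (CUN)-style clauses. -/
inductive canonR2 (k l m n : ℕ) (Γ : Set BForm) : BForm → BForm → Prop
  | base {A B : BForm} :
      bsat (canonV Γ) (canonR Γ) (.imp A B) → canonR2 k l m n Γ A B
  | gcun {A B : BForm} :
      bsat (canonV Γ) (canonR Γ) (.imp (negs k A) (negs l B)) →
      bsat (canonV Γ) (canonR Γ) (.conj (negs m A) (negs (n + 1) B)) →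
      canonR2 k l m n Γ (negs m A) (negs n B)
  | cun {A B : BForm} :
      bsat (canonV Γ) (canonR Γ) (.imp A B) →
      bsat (canonV Γ) (canonR Γ) (.conj (.neg A) B) →
      canonR2 k l m n Γ (.neg A) (.neg B)

/-!
Soundness is a direct check of each axiom: (b0) makes the two arrows in (B1) and (B2)
incompatible, so the negated consequents of those axioms hold whenever their antecedents do.

Completeness is the canonical-model argument. Any calculus containing the classical tautologies
and closed under modus ponens has the deduction theorem and Lindenbaum's lemma.
For a maximal consistent set Γ of Ax_BCL take v(p) = 1 iff p ∈ Γ and R(A, B) iff A → B ∈ Γ. Because of (Imp), the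
truth condition for A → B collapses to A → B ∈ Γ, so truth in this model is membership in Γ,
and the axioms (A1), (A2), (B1), (B2) make R satisfy (a1), (a2), (b0), (b1), (b2).
-/

section Tautologies

variable (A B C : BForm)

lemma isTautInst_bhimp_self : IsTautInst (bhimp A A) := by
  intro e hn _ hd
  simp only [bhimp, hd, hn]
  cases e A <;> rfl

lemma isTautInst_bhimp_const : IsTautInst (bhimp B (bhimp A B)) := by
  intro e hn _ hd
  simp only [bhimp, hd, hn]
  cases e A <;> cases e B <;> rfl

lemma isTautInst_bhimp_distrib :
    IsTautInst (bhimp (bhimp A B) (bhimp (bhimp A (bhimp B C)) (bhimp A C))) := by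
  intro e hn _ hd
  simp only [bhimp, hd, hn]
  cases e A <;> cases e B <;> cases e C <;> rfl

lemma isTautInst_neg_bhimp : IsTautInst (bhimp (.neg A) (bhimp A B)) := by
  intro e hn _ hd
  simp only [bhimp, hd, hn]
  cases e A <;> cases e B <;> rfl

lemma isTautInst_bhimp_of_neg_bhimp_self : IsTautInst (bhimp (bhimp (.neg A) A) A) := by
  intro e hn _ hd
  simp only [bhimp, hd, hn]
  cases e A <;> rfl

lemma isTautInst_neg_of_bhimp_neg_self : IsTautInst (bhimp (bhimp A (.neg A)) (.neg A)) := by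
  intro e hn _ hd
  simp only [bhimp, hd, hn]
  cases e A <;> rfl

lemma isTautInst_conj_left : IsTautInst (bhimp (.conj A B) A) := by
  intro e hn hc hd
  simp only [bhimp, hd, hn, hc]
  cases e A <;> cases e B <;> rfl

lemma isTautInst_conj_right : IsTautInst (bhimp (.conj A B) B) := by
  intro e hn hc hd
  simp only [bhimp, hd, hn, hc]
  cases e A <;> cases e B <;> rfl

lemma isTautInst_conj_intro : IsTautInst (bhimp A (bhimp B (.conj A B))) := by
  intro e hn hc hd
  simp only [bhimp, hd, hn, hc]
  cases e A <;> cases e B <;> rfl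

lemma isTautInst_disj_inl : IsTautInst (bhimp A (.disj A B)) := by
  intro e hn _ hd
  simp only [bhimp, hd, hn]
  cases e A <;> cases e B <;> rfl

lemma isTautInst_disj_inr : IsTautInst (bhimp B (.disj A B)) := by
  intro e hn _ hd
  simp only [bhimp, hd, hn]
  cases e A <;> cases e B <;> rfl

lemma isTautInst_disj_resolve_left : IsTautInst (bhimp (.disj A B) (bhimp (.neg A) B)) := by
  intro e hn _ hd
  simp only [bhimp, hd, hn]
  cases e A <;> cases e B <;> rfl

end Tautologies

section Soundness

variable {v : ℕ → Bool} {R : BForm → BForm → Prop}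

lemma bsat_bhimp {A B : BForm} : bsat v R (bhimp A B) ↔ (bsat v R A → bsat v R B) :=
  imp_iff_not_or.symm

open Classical in
lemma bsat_of_isTautInst {A : BForm} (h : IsTautInst A) : bsat v R A := by
  refine of_decide_eq_true (h (fun B => decide (bsat v R B)) ?_ ?_ ?_) <;>
    intros <;> rw [Bool.eq_iff_iff] <;>
    simp only [decide_eq_true_iff, Bool.not_eq_true', decide_eq_false_iff_not, Bool.and_eq_true,
      Bool.or_eq_true] <;> rfl

lemma bsat_of_bax (h1 : condA1 R) (h2 : condA2 R) (h0 : condB0 R) (hb1 : condB1 R)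
    (hb2 : condB2 R) {A : BForm} (hA : BAx A) : bsat v R A := by
  cases hA with
  | taut h => exact bsat_of_isTautInst h
  | a1 A => exact fun h => h1 A h.2
  | a2 A => exact fun h => h2 A h.2
  | b1 A B => exact ⟨not_or_of_imp fun h h' => h0 A B h.2 h'.2, hb1 A B⟩
  | b2 A B => exact ⟨not_or_of_imp fun h h' => h0 A B h'.2 h.2, hb2 A B⟩
  | impAx A B =>
      exact bsat_bhimp.2 fun h => bsat_bhimp.2 fun hA => h.1.resolve_left (not_not_intro hA)

lemma bsat_of_bthm (h1 : condA1 R) (h2 : condA2 R) (h0 : condB0 R) (hb1 : condB1 R)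
    (hb2 : condB2 R) {A : BForm} (hA : BThm BAx A) : bsat v R A := by
  induction hA with
  | ax hA => exact bsat_of_bax h1 h2 h0 hb1 hb2 hA
  | mp _ _ ihA ihAB => exact bsat_bhimp.1 ihAB ihA

end Soundness

section Derivability

variable {Ax : BForm → Prop} {Γ Δ : Set BForm} {A B : BForm}

lemma BDeriv.bthm (h : BDeriv Ax ∅ A) : BThm Ax A := by
  induction h with
  | ax h => exact .ax h
  | prem h => exact absurd h (Set.notMem_empty _)
  | mp _ _ ih₁ ih₂ => exact .mp ih₁ ih₂

lemma BDeriv.mono (hΓΔ : Γ ⊆ Δ) (h : BDeriv Ax Γ A) : BDeriv Ax Δ A := by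
  induction h with
  | ax h => exact .ax h
  | prem h => exact .prem (hΓΔ h)
  | mp _ _ ih₁ ih₂ => exact .mp ih₁ ih₂

lemma BDeriv.cut (h : BDeriv Ax (insert A Γ) B) (hA : BDeriv Ax Γ A) : BDeriv Ax Γ B := by
  induction h with
  | ax h => exact .ax h
  | prem h => exact h.elim (· ▸ hA) .prem
  | mp _ _ ih₁ ih₂ => exact .mp ih₁ ih₂

lemma BDeriv.deduction (hT : ∀ {C}, IsTautInst C → Ax C) (h : BDeriv Ax (insert A Γ) B) :
    BDeriv Ax Γ (bhimp A B) := by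
  induction h with
  | @ax B h => exact .mp (.ax h) (.ax (hT (isTautInst_bhimp_const A B)))
  | @prem B h =>
      rcases h with rfl | h
      · exact .ax (hT (isTautInst_bhimp_self B))
      · exact .mp (.prem h) (.ax (hT (isTautInst_bhimp_const A B)))
  | @mp X B _ _ ih₁ ih₂ =>
      exact .mp ih₂ (.mp ih₁ (.ax (hT (isTautInst_bhimp_distrib A X B))))

lemma BDeriv.explosion (hT : ∀ {C}, IsTautInst C → Ax C) (h : BDeriv Ax Γ A)
    (hn : BDeriv Ax Γ (.neg A)) (B : BForm) : BDeriv Ax Γ B :=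
  .mp h (.mp hn (.ax (hT (isTautInst_neg_bhimp A B))))

lemma not_bconsistent_iff : ¬ BConsistent Ax Γ ↔ ∀ A, BDeriv Ax Γ A := by
  simp [BConsistent]

lemma BDeriv.of_not_bconsistent_insert_neg (hT : ∀ {C}, IsTautInst C → Ax C)
    (h : ¬ BConsistent Ax (insert (.neg A) Γ)) : BDeriv Ax Γ A :=
  .mp ((not_bconsistent_iff.1 h A).deduction hT)
    (.ax (hT (isTautInst_bhimp_of_neg_bhimp_self A)))

lemma BDeriv.neg_of_not_bconsistent_insert (hT : ∀ {C}, IsTautInst C → Ax C)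
    (h : ¬ BConsistent Ax (insert A Γ)) : BDeriv Ax Γ (.neg A) :=
  .mp ((not_bconsistent_iff.1 h (.neg A)).deduction hT)
    (.ax (hT (isTautInst_neg_of_bhimp_neg_self A)))

lemma BDeriv.exists_mem_of_sUnion {c : Set (Set BForm)} (hc : IsChain (· ⊆ ·) c)
    (hne : c.Nonempty) (h : BDeriv Ax (⋃₀ c) A) : ∃ Δ ∈ c, BDeriv Ax Δ A := by
  induction h with
  | ax h => exact hne.imp fun Δ hΔ => ⟨hΔ, .ax h⟩
  | prem h => exact h.imp fun Δ hΔ => ⟨hΔ.1, .prem hΔ.2⟩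
  | mp _ _ ih₁ ih₂ =>
      obtain ⟨Δ₁, hΔ₁, hd₁⟩ := ih₁
      obtain ⟨Δ₂, hΔ₂, hd₂⟩ := ih₂
      obtain ⟨Δ, hΔ, h₁, h₂⟩ := hc.directedOn Δ₁ hΔ₁ Δ₂ hΔ₂
      exact ⟨Δ, hΔ, .mp (hd₁.mono h₁) (hd₂.mono h₂)⟩

lemma bconsistent_sUnion (hT : ∀ {C}, IsTautInst C → Ax C) {c : Set (Set BForm)}
    (hcons : ∀ Δ ∈ c, BConsistent Ax Δ) (hc : IsChain (· ⊆ ·) c) (hne : c.Nonempty) :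
    BConsistent Ax (⋃₀ c) := by
  by_contra h
  have hall := not_bconsistent_iff.1 h
  obtain ⟨Δ₁, hΔ₁, hd₁⟩ := (hall (.var 0)).exists_mem_of_sUnion hc hne
  obtain ⟨Δ₂, hΔ₂, hd₂⟩ := (hall (.neg (.var 0))).exists_mem_of_sUnion hc hne
  obtain ⟨Δ, hΔ, h₁, h₂⟩ := hc.directedOn Δ₁ hΔ₁ Δ₂ hΔ₂
  exact not_bconsistent_iff.2 ((hd₁.mono h₁).explosion hT (hd₂.mono h₂)) (hcons Δ hΔ)

lemma exists_bmaxCon_superset (hT : ∀ {C}, IsTautInst C → Ax C) (h : BConsistent Ax Γ) :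
    ∃ Δ, Γ ⊆ Δ ∧ BMaxCon Ax Δ := by
  obtain ⟨Δ, hΓΔ, hmax⟩ := zorn_subset_nonempty {Δ | BConsistent Ax Δ}
    (fun c hcons hc hne => ⟨⋃₀ c, bconsistent_sUnion hT hcons hc hne,
      fun _ => Set.subset_sUnion_of_mem⟩) Γ h
  exact ⟨Δ, hΓΔ, hmax.prop, fun Θ hΔΘ hΘ => hΔΘ.2 (hmax.2 hΘ hΔΘ.1)⟩

end Derivability

namespace BMaxCon

variable {Ax : BForm → Prop} {Γ : Set BForm} {A B : BForm}

lemma mem_of_bderiv (hΓ : BMaxCon Ax Γ) (h : BDeriv Ax Γ A) : A ∈ Γ := by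
  by_contra hA
  obtain ⟨W, hW⟩ := hΓ.1
  exact hW ((not_bconsistent_iff.1 (hΓ.2 _ (Set.ssubset_insert hA)) W).cut h)

lemma mem_of_ax (hΓ : BMaxCon Ax Γ) (h : Ax A) : A ∈ Γ :=
  hΓ.mem_of_bderiv (.ax h)

lemma mem_of_mem_bhimp (hΓ : BMaxCon Ax Γ) (hA : A ∈ Γ) (hAB : bhimp A B ∈ Γ) : B ∈ Γ :=
  hΓ.mem_of_bderiv (.mp (.prem hA) (.prem hAB))

lemma neg_mem_iff (hT : ∀ {C}, IsTautInst C → Ax C) (hΓ : BMaxCon Ax Γ) :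
    .neg A ∈ Γ ↔ A ∉ Γ := by
  refine ⟨fun hn hA => ?_, fun hA => ?_⟩
  · obtain ⟨W, hW⟩ := hΓ.1
    exact hW (BDeriv.explosion hT (.prem hA) (.prem hn) W)
  · exact hΓ.mem_of_bderiv (.neg_of_not_bconsistent_insert hT (hΓ.2 _ (Set.ssubset_insert hA)))

lemma conj_mem_iff (hT : ∀ {C}, IsTautInst C → Ax C) (hΓ : BMaxCon Ax Γ) :
    .conj A B ∈ Γ ↔ A ∈ Γ ∧ B ∈ Γ := by
  refine ⟨fun h => ⟨?_, ?_⟩, fun ⟨hA, hB⟩ => ?_⟩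
  · exact hΓ.mem_of_mem_bhimp h (hΓ.mem_of_ax (hT (isTautInst_conj_left A B)))
  · exact hΓ.mem_of_mem_bhimp h (hΓ.mem_of_ax (hT (isTautInst_conj_right A B)))
  · exact hΓ.mem_of_mem_bhimp hB
      (hΓ.mem_of_mem_bhimp hA (hΓ.mem_of_ax (hT (isTautInst_conj_intro A B))))

lemma disj_mem_iff (hT : ∀ {C}, IsTautInst C → Ax C) (hΓ : BMaxCon Ax Γ) :
    .disj A B ∈ Γ ↔ A ∈ Γ ∨ B ∈ Γ := by
  refine ⟨fun h => or_iff_not_imp_left.2 fun hA => ?_,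
    fun h => h.elim (fun hA => ?_) fun hB => ?_⟩
  · exact hΓ.mem_of_mem_bhimp ((neg_mem_iff hT hΓ).2 hA)
      (hΓ.mem_of_mem_bhimp h (hΓ.mem_of_ax (hT (isTautInst_disj_resolve_left A B))))
  · exact hΓ.mem_of_mem_bhimp hA (hΓ.mem_of_ax (hT (isTautInst_disj_inl A B)))
  · exact hΓ.mem_of_mem_bhimp hB (hΓ.mem_of_ax (hT (isTautInst_disj_inr A B)))

lemma bhimp_mem_of_imp_mem (hΓ : BMaxCon BAx Γ) (h : .imp A B ∈ Γ) : bhimp A B ∈ Γ :=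
  hΓ.mem_of_mem_bhimp h (hΓ.mem_of_ax (.impAx A B))

end BMaxCon

section CanonicalModel

variable {Γ : Set BForm}

lemma bsat_canon_iff_mem (hΓ : BMaxCon BAx Γ) (A : BForm) :
    bsat (canonV Γ) (canonR Γ) A ↔ A ∈ Γ := by
  induction A with
  | var p => simp [bsat, canonV]
  | neg A ih => rw [bsat, ih, hΓ.neg_mem_iff .taut]
  | conj A B ihA ihB => rw [bsat, ihA, ihB, hΓ.conj_mem_iff .taut]
  | disj A B ihA ihB => rw [bsat, ihA, ihB, hΓ.disj_mem_iff .taut]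
  | imp A B ihA ihB =>
      rw [bsat, ihA, ihB, canonR, and_iff_right_iff_imp, ← imp_iff_not_or]
      exact fun h hA => hΓ.mem_of_mem_bhimp hA (hΓ.bhimp_mem_of_imp_mem h)

lemma condA1_canonR (hΓ : BMaxCon BAx Γ) : condA1 (canonR Γ) := fun A h =>
  (hΓ.neg_mem_iff .taut).1 (hΓ.mem_of_ax (.a1 A)) h

lemma condA2_canonR (hΓ : BMaxCon BAx Γ) : condA2 (canonR Γ) := fun A h =>
  (hΓ.neg_mem_iff .taut).1 (hΓ.mem_of_ax (.a2 A)) h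

lemma condB0_canonR (hΓ : BMaxCon BAx Γ) : condB0 (canonR Γ) := fun A B h h' =>
  (hΓ.neg_mem_iff .taut).1
    (hΓ.mem_of_mem_bhimp h (hΓ.bhimp_mem_of_imp_mem (hΓ.mem_of_ax (.b1 A B)))) h'

lemma condB1_canonR (hΓ : BMaxCon BAx Γ) : condB1 (canonR Γ) := fun A B =>
  hΓ.mem_of_ax (.b1 A B)

lemma condB2_canonR (hΓ : BMaxCon BAx Γ) : condB2 (canonR Γ) := fun A B =>
  hΓ.mem_of_ax (.b2 A B)

end CanonicalModel

/-- Soundness and completeness of Ax_BCL: A is a theorem of Ax_BCL iff A is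
valid in every relation satisfying (a1), (a2), (b0), (b1), (b2). -/
theorem bcl_adequacy (A : BForm) :
    BThm BAx A ↔
      ∀ R : BForm → BForm → Prop,
        condA1 R → condA2 R → condB0 R → condB1 R → condB2 R → bvalid R A := by
  refine ⟨fun hA R h1 h2 h0 hb1 hb2 v => bsat_of_bthm h1 h2 h0 hb1 hb2 hA, fun hA => ?_⟩
  by_contra hnA
  have hcons : BConsistent BAx (insert (.neg A) ∅) := by
    by_contra h
    exact hnA (BDeriv.of_not_bconsistent_insert_neg BAx.taut h).bthm
  obtain ⟨Γ, hΓA, hΓ⟩ := exists_bmaxCon_superset BAx.taut hcons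
  have hA_mem : A ∈ Γ := (bsat_canon_iff_mem hΓ A).1 <| hA _ (condA1_canonR hΓ)
    (condA2_canonR hΓ) (condB0_canonR hΓ) (condB1_canonR hΓ) (condB2_canonR hΓ) _
  exact (hΓ.neg_mem_iff BAx.taut).1 (hΓA (Set.mem_insert _ _)) hA_mem
end

section
/- For every formula A ∈ For_BCL: A is a theorem of Ax_BCL-CUN if and only if A is valid in every binary relation R on For_BCL satisfying (a1), (a2), (b0), (b1), (b2) and (cun). -/
namespace BCLWork
open BForm

def bbot : BForm := .conj (.var 0) (.neg (.var 0))

lemma tK (B C : BForm) : IsTautInst (bhimp C (bhimp B C)) := by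
  intro e hn hc hd
  simp only [bhimp, hd, hn]
  cases e B <;> cases e C <;> rfl

lemma tS (B D C : BForm) :
    IsTautInst (bhimp (bhimp B (bhimp D C)) (bhimp (bhimp B D) (bhimp B C))) := by
  intro e hn hc hd
  simp only [bhimp, hd, hn]
  cases e B <;> cases e C <;> cases e D <;> rfl

lemma tId (B : BForm) : IsTautInst (bhimp B B) := by
  intro e hn hc hd
  simp only [bhimp, hd, hn]
  cases e B <;> rfl

lemma tBot (C : BForm) : IsTautInst (bhimp bbot C) := by
  intro e hn hc hd
  simp only [bhimp, bbot, hd, hn, hc]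
  cases e (var 0) <;> cases e C <;> rfl

lemma tNegIntro (B : BForm) : IsTautInst (bhimp (bhimp B bbot) (neg B)) := by
  intro e hn hc hd
  simp only [bhimp, bbot, hd, hn, hc]
  cases e (var 0) <;> cases e B <;> rfl

lemma tNegElim (B : BForm) : IsTautInst (bhimp (bhimp (neg B) bbot) B) := by
  intro e hn hc hd
  simp only [bhimp, bbot, hd, hn, hc]
  cases e (var 0) <;> cases e B <;> rfl

lemma tNegElim' (B : BForm) : IsTautInst (bhimp (bhimp (neg B) B) B) := by
  intro e hn hc hd
  simp only [bhimp, hd, hn]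
  cases e B <;> rfl

lemma tPairBot (B : BForm) : IsTautInst (bhimp B (bhimp (neg B) bbot)) := by
  intro e hn hc hd
  simp only [bhimp, bbot, hd, hn, hc]
  cases e (var 0) <;> cases e B <;> rfl

lemma tConj1 (B C : BForm) : IsTautInst (bhimp (conj B C) B) := by
  intro e hn hc hd
  simp only [bhimp, hd, hn, hc]
  cases e B <;> cases e C <;> rfl

lemma tConj2 (B C : BForm) : IsTautInst (bhimp (conj B C) C) := by
  intro e hn hc hd
  simp only [bhimp, hd, hn, hc]
  cases e B <;> cases e C <;> rfl

lemma tConjI (B C : BForm) : IsTautInst (bhimp B (bhimp C (conj B C))) := by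
  intro e hn hc hd
  simp only [bhimp, hd, hn, hc]
  cases e B <;> cases e C <;> rfl

lemma tDisj1 (B C : BForm) : IsTautInst (bhimp B (disj B C)) := by
  intro e hn hc hd
  simp only [bhimp, hd, hn]
  cases e B <;> cases e C <;> rfl

lemma tDisj2 (B C : BForm) : IsTautInst (bhimp C (disj B C)) := by
  intro e hn hc hd
  simp only [bhimp, hd, hn]
  cases e B <;> cases e C <;> rfl

lemma tDisjE (B C : BForm) : IsTautInst (bhimp (disj B C) (bhimp (neg B) C)) := by
  intro e hn hc hd
  simp only [bhimp, hd, hn]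
  cases e B <;> cases e C <;> rfl

lemma sat_of_taut {v : ℕ → Bool} {R : BForm → BForm → Prop} {A : BForm}
    (h : IsTautInst A) : bsat v R A := by
  classical
  have he := h (fun B => decide (bsat v R B)) ?_ ?_ ?_
  · exact of_decide_eq_true he
  · intro B; by_cases hB : bsat v R B <;> simp [bsat, hB]
  · intro B C; by_cases hB : bsat v R B <;> by_cases hC : bsat v R C <;> simp [bsat, hB, hC]
  · intro B C; by_cases hB : bsat v R B <;> by_cases hC : bsat v R C <;> simp [bsat, hB, hC]

-- Soundness
lemma bcl_sound {A : BForm} (h : BThm BAxCUN A) (R : BForm → BForm → Prop)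
    (h1 : condA1 R) (h2 : condA2 R) (h3 : condB0 R) (h4 : condB1 R)
    (h5 : condB2 R) (h6 : condCUN R) : bvalid R A := by
  induction h with
  | mp _ _ ihA ihAB =>
    intro v
    rcases ihAB v with hA | hB
    · exact absurd (ihA v) hA
    · exact hB
  | ax hA =>
    intro v
    cases hA with
    | cun1 A B =>
      show ¬ bsat v R (.imp A B) ∨ _
      by_cases hAB : bsat v R (.imp A B)
      · right
        obtain ⟨tp, hR⟩ := hAB
        by_cases hA : bsat v R A
        · left
          exact ⟨Or.inl (fun hnA => hnA hA), h6 _ _ hR⟩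
        · by_cases hB : bsat v R B
          · right; exact ⟨hA, hB⟩
          · left; exact ⟨Or.inr hB, h6 _ _ hR⟩
      · left; exact hAB
    | cun2 A B =>
      show ¬ bsat v R (.imp A B) ∨ _
      by_cases hAB : bsat v R (.imp A B)
      · right
        obtain ⟨tp, hR⟩ := hAB
        refine ⟨?_, h6 _ _ (h6 _ _ hR)⟩
        rcases tp with hnA | hB
        · left; intro hnnA; exact hnnA hnA
        · right; intro hnB; exact hnB hB
      · left; exact hAB
    | base hB =>
      cases hB with
      | taut ht => exact sat_of_taut ht
      | a1 A => rintro ⟨-, hR⟩; exact h1 A hR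
      | a2 A => rintro ⟨-, hR⟩; exact h2 A hR
      | b1 A B =>
        refine ⟨?_, h4 A B⟩
        by_cases hAB : bsat v R (.imp A B)
        · right
          rintro ⟨-, hR'⟩
          exact h3 A B hAB.2 hR'
        · left; exact hAB
      | b2 A B =>
        refine ⟨?_, h5 A B⟩
        by_cases hAB : bsat v R (.imp A (.neg B))
        · right
          rintro ⟨-, hR'⟩
          exact h3 A B hR' hAB.2
        · left; exact hAB
      | impAx A B =>
        show ¬ bsat v R (.imp A B) ∨ _
        by_cases hAB : bsat v R (.imp A B)
        · right; exact hAB.1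
        · left; exact hAB

-- Derivation machinery
lemma thm_deriv {A : BForm} {Γ : Set BForm} (h : BThm BAxCUN A) : BDeriv BAxCUN Γ A := by
  induction h with
  | ax hA => exact .ax hA
  | mp _ _ ih1 ih2 => exact .mp ih1 ih2

lemma deriv_mono {A : BForm} {Γ Δ : Set BForm} (hΓΔ : Γ ⊆ Δ)
    (h : BDeriv BAxCUN Γ A) : BDeriv BAxCUN Δ A := by
  induction h with
  | ax hA => exact .ax hA
  | prem hA => exact .prem (hΓΔ hA)
  | mp _ _ ih1 ih2 => exact .mp ih1 ih2

lemma taut_thm {A : BForm} (h : IsTautInst A) : BThm BAxCUN A := .ax (.base (.taut h))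
lemma taut_deriv {A : BForm} {Γ : Set BForm} (h : IsTautInst A) : BDeriv BAxCUN Γ A :=
  .ax (.base (.taut h))

lemma deduction {Γ : Set BForm} {B C : BForm}
    (h : BDeriv BAxCUN (insert B Γ) C) : BDeriv BAxCUN Γ (bhimp B C) := by
  induction h with
  | @ax D hD => exact .mp (.ax hD) (taut_deriv (tK B D))
  | @prem D hD =>
    rcases hD with hD | hD
    · subst hD; exact taut_deriv (tId D)
    · exact .mp (.prem hD) (taut_deriv (tK B D))
  | @mp D E _ _ ih1 ih2 =>
    exact .mp ih1 (.mp ih2 (taut_deriv (tS B D E)))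

lemma deriv_cut {Γ : Set BForm} {B C : BForm} (hB : BDeriv BAxCUN Γ B)
    (h : BDeriv BAxCUN (insert B Γ) C) : BDeriv BAxCUN Γ C :=
  .mp hB (deduction h)

lemma deriv_finite {Γ : Set BForm} {A : BForm} (h : BDeriv BAxCUN Γ A) :
    ∃ S : Finset BForm, ↑S ⊆ Γ ∧ BDeriv BAxCUN ↑S A := by
  induction h with
  | @ax D hD => exact ⟨∅, by simp, .ax hD⟩
  | @prem D hD => exact ⟨{D}, by simpa using hD, .prem (by simp)⟩
  | @mp D E _ _ ih1 ih2 =>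
    obtain ⟨S1, hS1, hd1⟩ := ih1
    obtain ⟨S2, hS2, hd2⟩ := ih2
    refine ⟨S1 ∪ S2, ?_, ?_⟩
    · intro x hx
      rcases Finset.mem_union.mp (by exact_mod_cast hx) with hx | hx
      · exact hS1 hx
      · exact hS2 hx
    · exact .mp (deriv_mono (Finset.coe_subset.mpr Finset.subset_union_left) hd1)
        (deriv_mono (Finset.coe_subset.mpr Finset.subset_union_right) hd2)

lemma incons_iff {Γ : Set BForm} :
    ¬ BConsistent BAxCUN Γ ↔ BDeriv BAxCUN Γ bbot := by
  constructor
  · intro h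
    by_contra hb
    exact h ⟨bbot, hb⟩
  · intro h hcon
    obtain ⟨C, hC⟩ := hcon
    exact hC (.mp h (taut_deriv (tBot C)))

lemma cons_iff {Γ : Set BForm} :
    BConsistent BAxCUN Γ ↔ ¬ BDeriv BAxCUN Γ bbot := by
  rw [← incons_iff]; tauto

-- Lindenbaum
lemma finset_chain_sub {c : Set (Set BForm)} (hc : IsChain (· ⊆ ·) c)
    (hne : c.Nonempty) (S : Finset BForm) (hS : ↑S ⊆ ⋃₀ c) : ∃ t ∈ c, ↑S ⊆ t := by
  classical
  induction S using Finset.induction with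
  | empty => obtain ⟨t, ht⟩ := hne; exact ⟨t, ht, by simp⟩
  | @insert a S ha ih =>
    have haU : a ∈ ⋃₀ c := hS (by simp)
    obtain ⟨t1, ht1, hat1⟩ := haU
    obtain ⟨t2, ht2, hSt2⟩ := ih (fun x hx => hS (by
      simp only [Finset.coe_insert, Set.mem_insert_iff]
      exact Or.inr hx))
    have key : ∀ t ∈ c, a ∈ t → ↑S ⊆ t → ↑(insert a S) ⊆ t := by
      intro t htc hat hSt x hx
      rcases Finset.mem_insert.mp (Finset.mem_coe.mp hx) with rfl | hx
      · exact hat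
      · exact hSt hx
    rcases eq_or_ne t1 t2 with rfl | hne12
    · exact ⟨t1, ht1, key t1 ht1 hat1 hSt2⟩
    rcases hc ht1 ht2 hne12 with h12 | h21
    · exact ⟨t2, ht2, key t2 ht2 (h12 hat1) hSt2⟩
    · exact ⟨t1, ht1, key t1 ht1 hat1 (fun x hx => h21 (hSt2 hx))⟩

lemma lindenbaum {Γ : Set BForm} (h : BConsistent BAxCUN Γ) :
    ∃ Δ, Γ ⊆ Δ ∧ BMaxCon BAxCUN Δ := by
  obtain ⟨m, hΓm, hmax⟩ := zorn_subset_nonempty {Δ : Set BForm | BConsistent BAxCUN Δ}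
    (fun c hcS hchain hcne => by
      refine ⟨⋃₀ c, ?_, fun s hs => Set.subset_sUnion_of_mem hs⟩
      rw [Set.mem_setOf_eq, cons_iff]
      intro hbot
      obtain ⟨S, hSsub, hSd⟩ := deriv_finite hbot
      obtain ⟨t, htc, hSt⟩ := finset_chain_sub hchain hcne S hSsub
      have : BDeriv BAxCUN t bbot := deriv_mono hSt hSd
      exact (cons_iff.mp (hcS htc)) this) Γ h
  refine ⟨m, hΓm, hmax.1, ?_⟩
  intro Δ hΔ hΔcon
  exact hΔ.not_subset (hmax.2 hΔcon hΔ.subset)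

-- Maximal consistent set lemmas
section MCS
variable {Γ : Set BForm} (hM : BMaxCon BAxCUN Γ)

include hM

lemma mem_of_deriv {B : BForm} (h : BDeriv BAxCUN Γ B) : B ∈ Γ := by
  by_contra hB
  have hss : Γ ⊂ insert B Γ := Set.ssubset_insert hB
  have hinc := hM.2 _ hss
  rw [incons_iff] at hinc
  exact cons_iff.mp hM.1 (deriv_cut h hinc)

lemma mem_thm {B : BForm} (h : BThm BAxCUN B) : B ∈ Γ := mem_of_deriv hM (thm_deriv h)

lemma mem_mp {B C : BForm} (h : bhimp B C ∈ Γ) (hB : B ∈ Γ) : C ∈ Γ :=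
  mem_of_deriv hM (.mp (.prem hB) (.prem h))

lemma neg_mem_iff {B : BForm} : BForm.neg B ∈ Γ ↔ B ∉ Γ := by
  constructor
  · intro hn hB
    have : BDeriv BAxCUN Γ bbot :=
      .mp (.prem hn) (.mp (.prem hB) (taut_deriv (tPairBot B)))
    exact cons_iff.mp hM.1 this
  · intro hB
    by_contra hn
    have hss : Γ ⊂ insert B Γ := Set.ssubset_insert hB
    have hinc := incons_iff.mp (hM.2 _ hss)
    have h1 : BDeriv BAxCUN Γ (bhimp B bbot) := deduction hinc
    have h2 : BDeriv BAxCUN Γ (.neg B) := .mp h1 (taut_deriv (tNegIntro B))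
    exact hn (mem_of_deriv hM h2)

lemma truth_lemma : ∀ C : BForm, bsat (canonV Γ) (canonR Γ) C ↔ C ∈ Γ := by
  intro C
  induction C with
  | var p =>
    show canonV Γ p = true ↔ _
    unfold canonV
    exact ⟨fun h => @of_decide_eq_true _ (Classical.propDecidable _) h,
      fun h => @decide_eq_true _ (Classical.propDecidable _) h⟩
  | neg B ih =>
    show ¬ bsat (canonV Γ) (canonR Γ) B ↔ _
    rw [ih, ← neg_mem_iff hM]
  | conj B C ihB ihC =>
    show (bsat _ _ B ∧ bsat _ _ C) ↔ _
    rw [ihB, ihC]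
    constructor
    · rintro ⟨hB, hC⟩
      exact mem_mp hM (mem_mp hM (mem_thm hM (taut_thm (tConjI B C))) hB) hC
    · intro h
      exact ⟨mem_mp hM (mem_thm hM (taut_thm (tConj1 B C))) h,
        mem_mp hM (mem_thm hM (taut_thm (tConj2 B C))) h⟩
  | disj B C ihB ihC =>
    show (bsat _ _ B ∨ bsat _ _ C) ↔ _
    rw [ihB, ihC]
    constructor
    · rintro (h | h)
      · exact mem_mp hM (mem_thm hM (taut_thm (tDisj1 B C))) h
      · exact mem_mp hM (mem_thm hM (taut_thm (tDisj2 B C))) h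
    · intro h
      by_cases hB : B ∈ Γ
      · exact Or.inl hB
      · right
        have hnB : BForm.neg B ∈ Γ := (neg_mem_iff hM).mpr hB
        exact mem_mp hM (mem_mp hM (mem_thm hM (taut_thm (tDisjE B C))) h) hnB
  | imp B C ihB ihC =>
    show ((¬ bsat _ _ B ∨ bsat _ _ C) ∧ canonR Γ B C) ↔ _
    constructor
    · rintro ⟨-, hR⟩
      exact hR
    · intro h
      refine ⟨?_, h⟩
      rw [ihB, ihC]
      by_cases hB : B ∈ Γ
      · right
        have h1 : bhimp B C ∈ Γ :=
          mem_mp hM (mem_thm hM (.ax (.base (.impAx B C)))) h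
        exact mem_mp hM h1 hB
      · exact Or.inl hB

end MCS

-- Second canonical model
section R2
variable {Γ : Set BForm} (hM : BMaxCon BAxCUN Γ)

/-- The second canonical relation. -/
def R2 (Γ : Set BForm) (A B : BForm) : Prop :=
  bsat (canonV Γ) (canonR Γ) (.imp A B) ∨
    ∃ X Y, A = .neg X ∧ B = .neg Y ∧ bsat (canonV Γ) (canonR Γ) (.imp X Y) ∧
      ¬ bsat (canonV Γ) (canonR Γ) X ∧ bsat (canonV Γ) (canonR Γ) Y

include hM

lemma sat_thm {T : BForm} (h : BThm BAxCUN T) : bsat (canonV Γ) (canonR Γ) T :=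
  (truth_lemma hM T).mpr (mem_thm hM h)

lemma sat_a1 (X : BForm) : ¬ bsat (canonV Γ) (canonR Γ) (.imp X (.neg X)) :=
  sat_thm hM (.ax (.base (.a1 X)))

lemma sat_a2 (X : BForm) : ¬ bsat (canonV Γ) (canonR Γ) (.imp (.neg X) X) :=
  sat_thm hM (.ax (.base (.a2 X)))

lemma sat_b1 {X Y : BForm} (h : bsat (canonV Γ) (canonR Γ) (.imp X Y)) :
    ¬ bsat (canonV Γ) (canonR Γ) (.imp X (.neg Y)) := by
  have hb := sat_thm hM (T := .imp (.imp X Y) (.neg (.imp X (.neg Y)))) (.ax (.base (.b1 X Y)))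
  rcases hb.1 with h1 | h1
  · exact absurd h h1
  · exact h1

lemma sat_b2 {X Y : BForm} (h : bsat (canonV Γ) (canonR Γ) (.imp X (.neg Y))) :
    ¬ bsat (canonV Γ) (canonR Γ) (.imp X Y) := by
  have hb := sat_thm hM (T := .imp (.imp X (.neg Y)) (.neg (.imp X Y))) (.ax (.base (.b2 X Y)))
  rcases hb.1 with h1 | h1
  · exact absurd h h1
  · exact h1

lemma sat_cun1 {X Y : BForm} (h : bsat (canonV Γ) (canonR Γ) (.imp X Y)) :
    bsat (canonV Γ) (canonR Γ) (.imp (.neg X) (.neg Y)) ∨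
      (¬ bsat (canonV Γ) (canonR Γ) X ∧ bsat (canonV Γ) (canonR Γ) Y) := by
  have hb := sat_thm hM (T := bhimp (.imp X Y)
    (.disj (.imp (.neg X) (.neg Y)) (.conj (.neg X) Y))) (.ax (.cun1 X Y))
  rcases hb with h1 | h1
  · exact absurd h h1
  · exact h1

lemma sat_cun2 {X Y : BForm} (h : bsat (canonV Γ) (canonR Γ) (.imp X Y)) :
    bsat (canonV Γ) (canonR Γ) (.imp (.neg (.neg X)) (.neg (.neg Y))) := by
  have hb := sat_thm hM (T := bhimp (.imp X Y)
    (.imp (.neg (.neg X)) (.neg (.neg Y)))) (.ax (.cun2 X Y))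
  rcases hb with h1 | h1
  · exact absurd h h1
  · exact h1

lemma R2_a1 : condA1 (R2 Γ) := by
  rintro A (h | ⟨X, Y, hAX, hAY, hXY, hX, hY⟩)
  · exact sat_a1 hM A h
  · rw [hAX] at hAY
    have : Y = BForm.neg X := by injection hAY.symm
    rw [this] at hXY
    exact sat_a1 hM X hXY

lemma R2_a2 : condA2 (R2 Γ) := by
  rintro A (h | ⟨X, Y, hAX, hAY, hXY, hX, hY⟩)
  · exact sat_a2 hM A h
  · have hX' : X = A := by injection hAX.symm
    rw [hX', hAY] at hXY
    exact sat_a2 hM Y hXY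

lemma R2_b1 : condB1 (R2 Γ) := by
  intro A B
  exact Or.inl (sat_thm hM (.ax (.base (.b1 A B))))

lemma R2_b2 : condB2 (R2 Γ) := by
  intro A B
  exact Or.inl (sat_thm hM (.ax (.base (.b2 A B))))

lemma R2_b0 : condB0 (R2 Γ) := by
  rintro A B (h1 | ⟨X, Y, hAX, hBY, hXY, hX, hY⟩) (h2 | ⟨X', Y', hAX', hBY', hXY', hX', hY'⟩)
  · exact sat_b1 hM h1 h2
  · -- h1 : sat (¬X' → Y'), with A = ¬X', neg B = ¬Y' so B = Y'
    have hB : B = Y' := by injection hBY'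
    rw [hAX', hB] at h1
    -- h1 : sat (¬X' → Y'), hXY' : sat (X' → Y'), hX' : ¬sat X', hY' : sat Y'
    have hcu := sat_cun1 hM h1
    rcases hcu with hc | ⟨hnX, _⟩
    · -- hc : sat (¬¬X' → ¬Y')
      have hc2' := sat_cun2 hM hXY'
      -- hc2' : sat (¬¬X' → ¬¬Y')
      exact sat_b2 hM hc2' hc
    · -- hnX : ¬ sat (¬X') i.e. sat X'
      exact hnX hX'
  · -- R2 A B by ∃: A = ¬X, B = ¬Y; h2 : sat (¬X → ¬¬Y)
    rw [hAX, hBY] at h2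
    have hcu := sat_cun1 hM h2
    rcases hcu with hc | ⟨hnX, _⟩
    · -- hc : sat (¬¬X → ¬¬¬Y)
      have hc2' := sat_cun2 hM hXY
      -- hc2' : sat (¬¬X → ¬¬Y)
      exact sat_b2 hM hc hc2'
    · -- hnX : ¬ sat (¬X), but hX : ¬ sat X
      exact hnX hX
  · -- both ∃: B = ¬Y and neg B = ¬Y' so Y' = ¬Y = B
    have hXX : X' = X := by rw [hAX] at hAX'; injection hAX'.symm
    have hYY : Y' = BForm.neg Y := by rw [hBY] at hBY'; injection hBY'.symm
    rw [hYY] at hY'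
    exact hY' hY

lemma R2_cun : condCUN (R2 Γ) := by
  rintro A B (h | ⟨X, Y, hAX, hBY, hXY, hX, hY⟩)
  · rcases sat_cun1 hM h with hc | ⟨hnX, hB⟩
    · exact Or.inl hc
    · exact Or.inr ⟨A, B, rfl, rfl, h, hnX, hB⟩
  · rw [hAX, hBY]
    exact Or.inl (sat_cun2 hM hXY)

omit hM in
lemma truth_lemma2 : ∀ C : BForm, bsat (canonV Γ) (R2 Γ) C ↔ bsat (canonV Γ) (canonR Γ) C := by
  intro C
  induction C with
  | var p => exact Iff.rfl
  | neg B ih => exact not_congr ih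
  | conj B C ihB ihC => exact and_congr ihB ihC
  | disj B C ihB ihC => exact or_congr ihB ihC
  | imp B C ihB ihC =>
    show ((¬ bsat _ (R2 Γ) B ∨ bsat _ (R2 Γ) C) ∧ R2 Γ B C) ↔ _
    constructor
    · rintro ⟨tp, h | ⟨X, Y, hBX, hCY, hXY, hX, hY⟩⟩
      · exact h
      · exfalso
        rcases tp with hnB | hC
        · rw [ihB, hBX] at hnB
          exact hnB hX
        · rw [ihC, hCY] at hC
          exact hC hY
    · intro h
      refine ⟨?_, Or.inl h⟩
      rcases h.1 with hnB | hC
      · exact Or.inl (fun hB => hnB (ihB.mp hB))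
      · exact Or.inr (ihC.mpr hC)

end R2

lemma deriv_empty_thm {B : BForm} (h : BDeriv BAxCUN ∅ B) : BThm BAxCUN B := by
  induction h with
  | ax hA => exact .ax hA
  | prem hA => exact absurd hA (Set.notMem_empty _)
  | mp _ _ ih1 ih2 => exact .mp ih1 ih2

end BCLWork


/-- Soundness and completeness of Ax_BCL-CUN: A is a theorem of Ax_BCL-CUN iff
A is valid in every relation satisfying (a1), (a2), (b0), (b1), (b2), (cun). -/
theorem bcl_cun_adequacy (A : BForm) :
    BThm BAxCUN A ↔
      ∀ R : BForm → BForm → Prop,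
        condA1 R → condA2 R → condB0 R → condB1 R → condB2 R → condCUN R →
          bvalid R A := by
  constructor
  · intro h R h1 h2 h3 h4 h5 h6
    exact BCLWork.bcl_sound h R h1 h2 h3 h4 h5 h6
  · intro hval
    by_contra hA
    have hcons : BConsistent BAxCUN {BForm.neg A} := by
      refine ⟨A, fun hd => hA ?_⟩
      have hd' : BDeriv BAxCUN (insert (BForm.neg A) ∅) A := by
        simpa using hd
      have h1 : BThm BAxCUN (bhimp (.neg A) A) :=
        BCLWork.deriv_empty_thm (BCLWork.deduction hd')
      exact BThm.mp h1 (BCLWork.taut_thm (BCLWork.tNegElim' A))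
    obtain ⟨Γ, hsub, hM⟩ := BCLWork.lindenbaum hcons
    have hnegA : BForm.neg A ∈ Γ := hsub rfl
    have hnsat : ¬ bsat (canonV Γ) (canonR Γ) A :=
      (BCLWork.truth_lemma hM (BForm.neg A)).mpr hnegA
    have h := hval (BCLWork.R2 Γ) (BCLWork.R2_a1 hM) (BCLWork.R2_a2 hM) (BCLWork.R2_b0 hM)
      (BCLWork.R2_b1 hM) (BCLWork.R2_b2 hM) (BCLWork.R2_cun hM) (canonV Γ)
    exact hnsat ((BCLWork.truth_lemma2 (Γ := Γ) A).mp h)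
end

section
/- For every formula φ ∈ For_MBCL containing no occurrence of □ or ◇ and every propositional variable p, φ is not logically equivalent to □p: there exist a model M for MBCL and a world w of M such that exactly one of M,w ⊨ φ and M,w ⊨ □p holds. -/
/-- φ contains no occurrence of □ or ◇. -/
def ModalFree : MForm → Prop
  | .var _ => True
  | .neg A => ModalFree A
  | .box _ => False
  | .dia _ => False
  | .conj A B => ModalFree A ∧ ModalFree B
  | .disj A B => ModalFree A ∧ ModalFree B
  | .imp A B => ModalFree A ∧ ModalFree B

/-- A model parametrized by an accessibility relation, with constant-false
valuation and total relating relation. -/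
def MX (Q : Bool → Bool → Prop) : MModel :=
  ⟨Bool, ⟨true⟩, Q, fun _ _ _ => True, fun _ _ => false⟩

/-- Truth of a modal-free formula does not depend on the accessibility
relation. -/
lemma msat_modalFree_iff (Q₁ Q₂ : Bool → Bool → Prop) (w : Bool) :
    ∀ φ : MForm, ModalFree φ → (msat (MX Q₁) w φ ↔ msat (MX Q₂) w φ) := by
  intro φ
  induction φ with
  | var q => intro _; simp [msat, MX]
  | neg A ih => intro h; simp only [msat]; exact not_congr (ih h)
  | box A _ => intro h; exact absurd h (by simp [ModalFree])
  | dia A _ => intro h; exact absurd h (by simp [ModalFree])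
  | conj A B ihA ihB => intro h; exact and_congr (ihA h.1) (ihB h.2)
  | disj A B ihA ihB => intro h; exact or_congr (ihA h.1) (ihB h.2)
  | imp A B ihA ihB =>
      intro h
      simp only [msat]
      exact and_congr (or_congr (not_congr (ihA h.1)) (ihB h.2)) Iff.rfl

/-- No modality-free formula is logically equivalent to □p: some model and
world distinguish them (exactly one of the two is true there). -/
theorem box_not_definable (φ : MForm) (hφ : ModalFree φ) (p : ℕ) :
    ∃ (M : MModel) (w : M.W),
      Xor' (msat M w φ) (msat M w (.box (.var p))) := by
  by_cases h : msat (MX fun _ _ => False) true φ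
  · refine ⟨MX fun _ _ => True, true, Or.inl ⟨?_, ?_⟩⟩
    · exact (msat_modalFree_iff _ _ _ φ hφ).mp h
    · intro hb
      have := hb false trivial
      simp [msat, MX] at this
  · refine ⟨MX fun _ _ => False, true, Or.inr ⟨?_, h⟩⟩
    intro u hu
    exact hu.elim
end

section
/- For all formulas A, B ∈ For_MBCL, the formula (A→B) ∧ (B→A) is not a theorem of Ax_MBCL. -/
/-- Material implication A ⊃ B for MForm, an abbreviation for ¬A ∨ B. -/
def mhimp (A B : MForm) : MForm := .disj (.neg A) B

/-- Material equivalence A ≡ B, an abbreviation for (¬A∨B)∧(¬B∨A). -/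
def mequiv (A B : MForm) : MForm := .conj (.disj (.neg A) B) (.disj (.neg B) A)

/-- A is a substitution instance of a classical propositional tautology:
A evaluates to true under every Boolean valuation of formulas that treats
¬, ∧, ∨ classically (variables, modal and →-formulas count as atoms). -/
def MIsTautInst (A : MForm) : Prop :=
  ∀ e : MForm → Bool,
    (∀ B, e (.neg B) = !(e B)) →
    (∀ B C, e (.conj B C) = (e B && e C)) →
    (∀ B C, e (.disj B C) = (e B || e C)) →
    e A = true

/-- Axioms of Ax_MBCL. -/
inductive MAx : MForm → Prop
  | taut {A : MForm} : MIsTautInst A → MAx A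
  | a1 (A : MForm) : MAx (.neg (.imp A (.neg A)))
  | a2 (A : MForm) : MAx (.neg (.imp (.neg A) A))
  | b1 (A B : MForm) : MAx (.imp (.imp A B) (.neg (.imp A (.neg B))))
  | b2 (A B : MForm) : MAx (.imp (.imp A (.neg B)) (.neg (.imp A B)))
  | impAx (A B : MForm) : MAx (mhimp (.imp A B) (mhimp A B))
  | dual (A : MForm) : MAx (mequiv (.dia A) (.neg (.box (.neg A))))
  | kAx (A B : MForm) : MAx (mhimp (.box (mhimp A B)) (mhimp (.box A) (.box B)))

/-- Theorems of an MBCL-style Hilbert calculus with axioms Ax, modus ponens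
and necessitation (applied to theorems). -/
inductive MThm (Ax : MForm → Prop) : MForm → Prop
  | ax {A : MForm} : Ax A → MThm Ax A
  | mp {A B : MForm} : MThm Ax A → MThm Ax (mhimp A B) → MThm Ax B
  | nec {A : MForm} : MThm Ax A → MThm Ax (.box A)

/-- Derivability of A from premises Γ : from theorems of the calculus and
members of Γ by modus ponens. -/
inductive MDeriv (Ax : MForm → Prop) (Γ : Set MForm) : MForm → Prop
  | thm {A : MForm} : MThm Ax A → MDeriv Ax Γ A
  | prem {A : MForm} : A ∈ Γ → MDeriv Ax Γ A
  | mp {A B : MForm} : MDeriv Ax Γ A → MDeriv Ax Γ (mhimp A B) → MDeriv Ax Γ B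



/-- Auxiliary relating function: true exactly on pairs (X→Y, ¬(X→¬Y)) and
(X→¬Z, ¬(X→Z)). -/
def rbfun : MForm → MForm → Bool
  | .imp X Y, .neg (.imp X' Z) => X == X' && (Z == .neg Y || Y == .neg Z)
  | _, _ => false

lemma rbfun_true {A B : MForm} (h : rbfun A B = true) :
    ∃ X Y Z, A = .imp X Y ∧ B = .neg (.imp X Z) ∧ (Z = .neg Y ∨ Y = .neg Z) := by
  unfold rbfun at h
  split at h
  · rename_i X Y X' Z
    simp only [beq_iff_eq, Bool.and_eq_true, Bool.or_eq_true, decide_eq_true_eq] at h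
    obtain ⟨h1, h2⟩ := h
    subst h1
    exact ⟨X, Y, Z, rfl, rfl, by tauto⟩
  · simp at h

lemma mform_ne_neg : ∀ A : MForm, A ≠ .neg A := by
  intro A h
  have := congrArg sizeOf h
  simp at this

/-- The key Boolean valuation. -/
def mval : MForm → Bool
  | .var _ => true
  | .neg A => !mval A
  | .box A => mval A
  | .dia A => mval A
  | .conj A B => mval A && mval B
  | .disj A B => mval A || mval B
  | .imp A B => (!mval A || mval B) && rbfun A B

lemma rbfun_not_both {A B : MForm} (h : rbfun A B = true) :
    rbfun A (.neg B) = false := by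
  obtain ⟨X, Y, Z, rfl, rfl, -⟩ := rbfun_true h
  by_contra hc
  simp only [Bool.not_eq_false] at hc
  obtain ⟨X', Y', Z', -, hB, -⟩ := rbfun_true hc
  simp at hB

lemma rbfun_not_both' {A B : MForm} (h : rbfun A (.neg B) = true) :
    rbfun A B = false := by
  by_contra hc
  simp only [Bool.not_eq_false] at hc
  have := rbfun_not_both hc
  simp [this] at h

lemma rbfun_neg_self (A : MForm) : rbfun A (.neg A) = false := by
  by_contra hc
  simp only [Bool.not_eq_false] at hc
  obtain ⟨X, Y, Z, hA, hB, hYZ⟩ := rbfun_true hc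
  rw [hA] at hB
  simp only [MForm.neg.injEq, MForm.imp.injEq] at hB
  obtain ⟨-, rfl⟩ := hB
  rcases hYZ with h | h <;> exact mform_ne_neg _ h

lemma mval_sound {A : MForm} (h : MThm MAx A) : mval A = true := by
  induction h with
  | ax hax =>
    cases hax with
    | taut ht => exact ht mval (fun B => rfl) (fun B C => rfl) (fun B C => rfl)
    | a1 A => simp [mval, rbfun_neg_self]
    | a2 A => simp [mval, rbfun]
    | b1 A B =>
      have hr : rbfun (.imp A B) (.neg (.imp A (.neg B))) = true := by
        simp [rbfun]
      cases h3 : rbfun A B with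
      | false => simp [mval, hr, h3]
      | true => simp [mval, hr, rbfun_not_both h3]
    | b2 A B =>
      have hr : rbfun (.imp A (.neg B)) (.neg (.imp A B)) = true := by
        simp [rbfun]
      cases h3 : rbfun A (.neg B) with
      | false => simp [mval, hr, h3]
      | true => simp [mval, hr, rbfun_not_both' h3]
    | impAx A B =>
      cases h1 : mval A <;> cases h2 : mval B <;> simp [mhimp, mval, h1, h2]
    | dual A => cases h1 : mval A <;> simp [mequiv, mval, h1]
    | kAx A B =>
      cases h1 : mval A <;> cases h2 : mval B <;> simp [mhimp, mval, h1, h2]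
  | mp hA hAB ihA ihAB =>
    simp only [mhimp, mval, ihA, Bool.not_true, Bool.false_or] at ihAB
    exact ihAB
  | nec h ih => simpa [mval] using ih

/-- No formula of the form (A→B) ∧ (B→A) is a theorem of Ax_MBCL. -/
theorem no_relating_equivalence_theorem (A B : MForm) :
    ¬ MThm MAx (.conj (.imp A B) (.imp B A)) := by
  intro h
  have hv := mval_sound h
  simp only [mval, Bool.and_eq_true] at hv
  obtain ⟨⟨-, h1⟩, -, h2⟩ := hv
  obtain ⟨X, Y, Z, rfl, hB, -⟩ := rbfun_true h1
  obtain ⟨X', Y', Z', hB', -, -⟩ := rbfun_true h2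
  rw [hB] at hB'
  exact MForm.noConfusion hB'
end

section
/- Each of the following four sets of conditions is unsatisfiable, i.e. no binary relation R on For_BCL satisfies all conditions in the set: {(a1), (R1), (R4)}; {(a2), (R1), (R3), (R4)}; {(b0), (b1), (R1)}; {(b0), (b2), (R1)}. -/
/-- Epstein's condition (R1): R(A,¬B) iff R(A,B). -/
def condR1 (R : BForm → BForm → Prop) : Prop := ∀ A B, R A (.neg B) ↔ R A B
/-- Epstein's condition (R3): R is symmetric. -/
def condR3 (R : BForm → BForm → Prop) : Prop := ∀ A B, R A B ↔ R B A
/-- Epstein's condition (R4): R is reflexive. -/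
def condR4 (R : BForm → BForm → Prop) : Prop := ∀ A, R A A

/-- Each of the four listed combinations of connexive and Epstein conditions
is unsatisfiable: no binary relation on BCL formulas meets all of them. -/
theorem epstein_connexive_inconsistent :
    (∀ R : BForm → BForm → Prop, ¬ (condA1 R ∧ condR1 R ∧ condR4 R)) ∧
    (∀ R : BForm → BForm → Prop, ¬ (condA2 R ∧ condR1 R ∧ condR3 R ∧ condR4 R)) ∧
    (∀ R : BForm → BForm → Prop, ¬ (condB0 R ∧ condB1 R ∧ condR1 R)) ∧
    (∀ R : BForm → BForm → Prop, ¬ (condB0 R ∧ condB2 R ∧ condR1 R)) := by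
  refine ⟨?_, ?_, ?_, ?_⟩
  · rintro R ⟨h1, hr1, hr4⟩
    exact h1 _ ((hr1 _ _).mpr (hr4 (BForm.var 0)))
  · rintro R ⟨h2, hr1, hr3, hr4⟩
    exact h2 _ ((hr3 _ _).mp ((hr1 _ _).mpr (hr4 (BForm.var 0))))
  · rintro R ⟨h0, h1, hr1⟩
    exact h0 _ _ ((hr1 _ _).mp (h1 (BForm.var 0) (BForm.var 0))) (h1 _ _)
  · rintro R ⟨h0, h2, hr1⟩
    exact h0 _ _ ((hr1 _ _).mp (h2 (BForm.var 0) (BForm.var 0))) (h2 _ _)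
end

section
/- No binary relation R on For_BCL satisfies simultaneously the generalized closure condition (GCUN) — for all natural numbers k, l, m, n and all formulas A, B, R(¬^k A, ¬^l B) implies R(¬^m A, ¬^n B) — together with (b0) and (b1); likewise no R satisfies (GCUN) together with (b0) and (b2). -/
/-- Generalized closure under negations (GCUN): for all k, l, m, n and all
formulas A, B, R(¬^k A, ¬^l B) implies R(¬^m A, ¬^n B). -/
def condGCUN (R : BForm → BForm → Prop) : Prop :=
  ∀ (k l m n : ℕ) (A B : BForm), R (negs k A) (negs l B) → R (negs m A) (negs n B)

/-- (GCUN) is inconsistent with (b0) together with (b1), and likewise with (b0)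
together with (b2). -/
theorem gcun_inconsistent :
    (∀ R : BForm → BForm → Prop, ¬ (condGCUN R ∧ condB0 R ∧ condB1 R)) ∧
    (∀ R : BForm → BForm → Prop, ¬ (condGCUN R ∧ condB0 R ∧ condB2 R)) := by
  constructor
  · rintro R ⟨hG, h0, h1⟩
    have h := h1 (.var 0) (.var 1)
    have h' : R (.imp (.var 0) (.var 1)) (.imp (.var 0) (.neg (.var 1))) :=
      hG 0 1 0 0 (.imp (.var 0) (.var 1)) (.imp (.var 0) (.neg (.var 1))) h
    exact h0 _ _ h' h
  · rintro R ⟨hG, h0, h2⟩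
    have h := h2 (.var 0) (.var 1)
    have h' : R (.imp (.var 0) (.neg (.var 1))) (.imp (.var 0) (.var 1)) :=
      hG 0 1 0 0 (.imp (.var 0) (.neg (.var 1))) (.imp (.var 0) (.var 1)) h
    exact h0 _ _ h' h
end

section
/- Truth lemma for the first canonical model: fix natural numbers k, l, m, n with k ≤ m, l ≤ n and k, l even. Let Γ be a maximal Ax_BCL^{k,l,m,n}-consistent set of formulas and M = ⟨v, R⟩ its first canonical model. Then for every formula A ∈ For_BCL, M ⊨ A if and only if A ∈ Γ. -/
section Aux
variable {Ax : BForm → Prop} {Γ : Set BForm}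

theorem bderiv_weaken {Δ : Set BForm} (h : Γ ⊆ Δ) {A : BForm}
    (d : BDeriv Ax Γ A) : BDeriv Ax Δ A := by
  induction d with
  | ax ha => exact .ax ha
  | prem hp => exact .prem (h hp)
  | mp _ _ ih1 ih2 => exact .mp ih1 ih2

theorem bthm_deriv {A : BForm} (d : BThm Ax A) : BDeriv Ax Γ A := by
  induction d with
  | ax ha => exact .ax ha
  | mp _ _ ih1 ih2 => exact .mp ih1 ih2

theorem taut_id (A : BForm) : IsTautInst (bhimp A A) := by
  intro e hn hc hd
  simp only [bhimp, hd, hn]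
  cases e A <;> simp

theorem taut_k (A B : BForm) : IsTautInst (bhimp B (bhimp A B)) := by
  intro e hn hc hd
  simp only [bhimp, hd, hn]
  cases e A <;> cases e B <;> simp

theorem taut_s (A B C : BForm) :
    IsTautInst (bhimp (bhimp A C) (bhimp (bhimp A (bhimp C B)) (bhimp A B))) := by
  intro e hn hc hd
  simp only [bhimp, hd, hn]
  cases e A <;> cases e B <;> cases e C <;> simp

variable (htaut : ∀ A, IsTautInst A → Ax A)
include htaut

theorem bded {A B : BForm} (d : BDeriv Ax (insert A Γ) B) :
    BDeriv Ax Γ (bhimp A B) := by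
  induction d with
  | @ax C ha =>
      exact .mp (.ax ha) (.ax (htaut _ (taut_k A C)))
  | @prem C hp =>
      rcases hp with h | h
      · rw [h]; exact .ax (htaut _ (taut_id A))
      · exact .mp (.prem h) (.ax (htaut _ (taut_k A C)))
  | @mp C B _ _ ih1 ih2 =>
      exact .mp ih2 (.mp ih1 (.ax (htaut _ (taut_s A B C))))

theorem bmax_closed (hΓ : BMaxCon Ax Γ) {A : BForm} (d : BDeriv Ax Γ A) :
    A ∈ Γ := by
  by_contra hA
  obtain ⟨⟨W, hW⟩, hmax⟩ := hΓ
  have hsub : Γ ⊂ insert A Γ := Set.ssubset_insert hA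
  have hinc := hmax _ hsub
  rw [BConsistent] at hinc
  push_neg at hinc
  exact hW (.mp d (bded htaut (hinc W)))

theorem bmax_mp (hΓ : BMaxCon Ax Γ) {A B : BForm} (hA : A ∈ Γ)
    (hAB : bhimp A B ∈ Γ) : B ∈ Γ :=
  bmax_closed htaut hΓ (.mp (.prem hA) (.prem hAB))

omit htaut in
theorem taut_expl (A B : BForm) : IsTautInst (bhimp A (bhimp (.neg A) B)) := by
  intro e hn hc hd
  simp only [bhimp, hd, hn]
  cases e A <;> cases e B <;> simp

theorem bmax_not_both (hΓ : BMaxCon Ax Γ) {A : BForm} (hA : A ∈ Γ)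
    (hnA : BForm.neg A ∈ Γ) : False := by
  obtain ⟨⟨W, hW⟩, -⟩ := hΓ
  exact hW (.mp (.prem hnA) (.mp (.prem hA) (.ax (htaut _ (taut_expl A W)))))

omit htaut in
theorem taut_clavius (A : BForm) :
    IsTautInst (bhimp (bhimp A (.neg A)) (.neg A)) := by
  intro e hn hc hd
  simp only [bhimp, hd, hn]
  cases e A <;> simp

theorem bmax_neg_iff (hΓ : BMaxCon Ax Γ) (A : BForm) :
    BForm.neg A ∈ Γ ↔ A ∉ Γ := by
  constructor
  · intro hn hA; exact bmax_not_both htaut hΓ hA hn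
  · intro hA
    obtain ⟨hcon, hmax⟩ := hΓ
    have hsub : Γ ⊂ insert A Γ := Set.ssubset_insert hA
    have hinc := hmax _ hsub
    rw [BConsistent] at hinc
    push_neg at hinc
    have d1 : BDeriv Ax Γ (bhimp A (.neg A)) := bded htaut (hinc _)
    exact bmax_closed htaut ⟨hcon, hmax⟩
      (.mp d1 (.ax (htaut _ (taut_clavius A))))

omit htaut in
theorem taut_conj1 (A B : BForm) : IsTautInst (bhimp (.conj A B) A) := by
  intro e hn hc hd
  simp only [bhimp, hd, hn, hc]
  cases e A <;> cases e B <;> simp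

omit htaut in
theorem taut_conj2 (A B : BForm) : IsTautInst (bhimp (.conj A B) B) := by
  intro e hn hc hd
  simp only [bhimp, hd, hn, hc]
  cases e A <;> cases e B <;> simp

omit htaut in
theorem taut_conj_intro (A B : BForm) :
    IsTautInst (bhimp A (bhimp B (.conj A B))) := by
  intro e hn hc hd
  simp only [bhimp, hd, hn, hc]
  cases e A <;> cases e B <;> simp

omit htaut in
theorem taut_disj1 (A B : BForm) : IsTautInst (bhimp A (.disj A B)) := by
  intro e hn hc hd
  simp only [bhimp, hd, hn]
  cases e A <;> cases e B <;> simp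

omit htaut in
theorem taut_disj2 (A B : BForm) : IsTautInst (bhimp B (.disj A B)) := by
  intro e hn hc hd
  simp only [bhimp, hd, hn]
  cases e A <;> cases e B <;> simp

omit htaut in
theorem taut_disj_neg (A B : BForm) :
    IsTautInst (bhimp (.neg A) (bhimp (.neg B) (.neg (.disj A B)))) := by
  intro e hn hc hd
  simp only [bhimp, hd, hn]
  cases e A <;> cases e B <;> simp

theorem bmax_conj_iff (hΓ : BMaxCon Ax Γ) (A B : BForm) :
    BForm.conj A B ∈ Γ ↔ A ∈ Γ ∧ B ∈ Γ := by
  constructor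
  · intro h
    exact ⟨bmax_mp htaut hΓ h (bmax_closed htaut hΓ (.ax (htaut _ (taut_conj1 A B)))),
      bmax_mp htaut hΓ h (bmax_closed htaut hΓ (.ax (htaut _ (taut_conj2 A B))))⟩
  · rintro ⟨hA, hB⟩
    exact bmax_closed htaut hΓ (.mp (.prem hB)
      (.mp (.prem hA) (.ax (htaut _ (taut_conj_intro A B)))))

theorem bmax_disj_iff (hΓ : BMaxCon Ax Γ) (A B : BForm) :
    BForm.disj A B ∈ Γ ↔ A ∈ Γ ∨ B ∈ Γ := by
  constructor
  · intro h
    by_contra hc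
    push_neg at hc
    have hnA : BForm.neg A ∈ Γ := (bmax_neg_iff htaut hΓ A).2 hc.1
    have hnB : BForm.neg B ∈ Γ := (bmax_neg_iff htaut hΓ B).2 hc.2
    have : BForm.neg (.disj A B) ∈ Γ := bmax_closed htaut hΓ
      (.mp (.prem hnB) (.mp (.prem hnA) (.ax (htaut _ (taut_disj_neg A B)))))
    exact bmax_not_both htaut hΓ h this
  · rintro (hA | hB)
    · exact bmax_closed htaut hΓ (.mp (.prem hA) (.ax (htaut _ (taut_disj1 A B))))
    · exact bmax_closed htaut hΓ (.mp (.prem hB) (.ax (htaut _ (taut_disj2 A B))))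

end Aux

/-- Truth lemma for the first canonical model of a maximal
Ax_BCL^{k,l,m,n}-consistent set Γ : a formula is true in the model iff it
belongs to Γ. -/
theorem gbcl_canonical_truth_lemma (k l m n : ℕ) (hkm : k ≤ m) (hln : l ≤ n)
    (hk : Even k) (hl : Even l) (Γ : Set BForm)
    (hΓ : BMaxCon (GAx k l m n) Γ) (A : BForm) :
    bsat (canonV Γ) (canonR Γ) A ↔ A ∈ Γ := by
  have htaut : ∀ B, IsTautInst B → GAx k l m n B :=
    fun B h => GAx.base (BAxCUN.base (BAx.taut h))
  induction A with
  | var p =>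
      simp only [bsat, canonV]
      exact @decide_eq_true_iff _ (Classical.propDecidable _)
  | neg B ih =>
      simp only [bsat, ih]
      exact (bmax_neg_iff htaut hΓ B).symm
  | conj B C ih1 ih2 =>
      simp only [bsat]
      simp only [ih1, ih2, bmax_conj_iff htaut hΓ]
  | disj B C ih1 ih2 =>
      simp only [bsat]
      simp only [ih1, ih2, bmax_disj_iff htaut hΓ]
  | imp B C ih1 ih2 =>
      simp only [bsat, canonR]
      constructor
      · rintro ⟨-, h⟩; exact h
      · intro h
        refine ⟨?_, h⟩
        simp only [ih1, ih2]
        have hax : bhimp (.imp B C) (bhimp B C) ∈ Γ :=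
          bmax_closed htaut hΓ (.ax (GAx.base (BAxCUN.base (BAx.impAx B C))))
        have hd : BForm.disj (.neg B) C ∈ Γ := bmax_mp htaut hΓ h hax
        rcases (bmax_disj_iff htaut hΓ _ _).1 hd with hnB | hC
        · exact Or.inl ((bmax_neg_iff htaut hΓ B).1 hnB)
        · exact Or.inr hC
end
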